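/- For all integers Δ ≥ 1, r ≥ 1 and all reals Λ > 0 and c₃ > 0 there exists a constant c₂ > 0 such that the following holds for every instance of the local-potential framework whose vertex set has n ≥ 2 elements. Let β > 0, let 0 < ε < β, and let (A_1, ℓ_1), …, (A_h, ℓ_h) be a sequence of β-improving sets with respect to a labeling ℓ such that any two vertices belonging to the same set A_i are at graph distance at most c₃·(log n)/ε in G. Then for every 1 ≤ j ≤ h and every v ∈ A_j there exist a natural number k ≤ c₂·(log n)²/ε², a nonempty set A ⊆ N_k[{v}] ∩ (A_1 ∪ … ∪ A_h), and a relabeling ℓ_A of A such that IR(A, ℓ, ℓ_A) ≥ β − ε. -/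

import Mathlib

open scoped Classical

/-- `withinDist G r u v` means the graph distance between `u` and `v` in `G`
is at most `r` (there is a walk of length at most `r`). -/
def withinDist {V : Type*} (G : SimpleGraph V) (r : ℕ) (u v : V) : Prop :=
  ∃ p : G.Walk u v, p.length ≤ r

/-- The improving ratio `IR(A, ℓ, ℓ') = (Pot(ℓ) − Pot(ℓ'))/|A|` if `A ≠ ∅`,
and `0` if `A = ∅`. -/
noncomputable def IR {V : Type*} [Fintype V] {L : Type*}
    (Ψ : V → (V → L) → ℝ) (A : Set V) (ℓ ℓ' : V → L) : ℝ :=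
  if A = ∅ then 0 else ((∑ v, Ψ v ℓ) - ∑ v, Ψ v ℓ') / A.ncard

/-!
Fix `v ∈ A j`, let `D` bound the diameters of the `A i` and `C = Λ (Δ + 1) ^ r`. Let `I t` be the
indices of the sets meeting the ball of radius `t (D + 2r)` around `v`, and `w t` their total
size. Performing only the relabelings with index in `I (t + 1)` keeps the full improvement
`≥ β |A i|` of every step of `I t`, because the potentials such a step changes only read labels
within `2r` of `A i`, and all steps there are performed; every other step of `I (t + 1)` loses at
most `C |A i|`. Hence if the union of the sets of `I (t + 1)` is not `(β - ε)`-improving,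
`w (t + 1) > (1 + ε / 2C) w t`. As `β w t ≤ Pot (ℓ 0) ≤ Λ n`, this growth stops after
`O(C / ε · log n)` rounds, at radius `O((log n)² / ε²)`.
-/

section Balls

variable {V : Type*} {G : SimpleGraph V}

lemma withinDist_refl (G : SimpleGraph V) (k : ℕ) (u : V) : withinDist G k u u :=
  ⟨.nil, by simp⟩

lemma withinDist.symm {k : ℕ} {u v : V} (h : withinDist G k u v) : withinDist G k v u :=
  let ⟨p, hp⟩ := h
  ⟨p.reverse, by simpa using hp⟩

lemma withinDist.mono {k k' : ℕ} (hk : k ≤ k') {u v : V} (h : withinDist G k u v) :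
    withinDist G k' u v :=
  let ⟨p, hp⟩ := h
  ⟨p, hp.trans hk⟩

lemma withinDist.trans {k k' : ℕ} {u v w : V} (h : withinDist G k u v)
    (h' : withinDist G k' v w) : withinDist G (k + k') u w :=
  let ⟨p, hp⟩ := h
  let ⟨q, hq⟩ := h'
  ⟨p.append q, by rw [SimpleGraph.Walk.length_append]; omega⟩

def closedNbhd (G : SimpleGraph V) (k : ℕ) (B : Set V) : Set V :=
  {u | ∃ x ∈ B, withinDist G k u x}

variable [Fintype V] {Δ : ℕ}

lemma ncard_setOf_withinDist_le (hdeg : ∀ v, (G.neighborSet v).ncard ≤ Δ) (x : V) (k : ℕ) :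
    {u | withinDist G k x u}.ncard ≤ (Δ + 1) ^ k := by
  induction k generalizing x with
  | zero =>
    have hball : {u | withinDist G 0 x u} = {x} := by
      ext u
      refine ⟨fun ⟨p, hp⟩ => (p.eq_of_length_eq_zero (Nat.le_zero.mp hp)).symm, ?_⟩
      rintro rfl
      exact withinDist_refl G 0 _
    simp [hball]
  | succ k ih =>
    have hsub : {u | withinDist G (k + 1) x u} ⊆
        ⋃ y ∈ (insert x (G.neighborSet x)).toFinset, {u | withinDist G k y u} := by
      rintro u ⟨p, hp⟩
      cases p with
      | nil => exact Set.mem_biUnion (by simp) (withinDist_refl G k _)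
      | cons hadj q =>
        exact Set.mem_biUnion (by simp [hadj]) ⟨q, by simpa using hp⟩
    have hcard : (insert x (G.neighborSet x)).toFinset.card ≤ Δ + 1 := by
      rw [← Set.ncard_eq_toFinset_card']
      exact (Set.ncard_insert_le _ _).trans (Nat.add_le_add_right (hdeg x) 1)
    calc {u | withinDist G (k + 1) x u}.ncard
        ≤ ∑ y ∈ (insert x (G.neighborSet x)).toFinset, {u | withinDist G k y u}.ncard :=
          (Set.ncard_le_ncard hsub).trans (Finset.set_ncard_biUnion_le _ _)
      _ ≤ ∑ _y ∈ (insert x (G.neighborSet x)).toFinset, (Δ + 1) ^ k :=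
          Finset.sum_le_sum fun y _ => ih y
      _ ≤ (Δ + 1) ^ (k + 1) := by
          rw [Finset.sum_const, smul_eq_mul, pow_succ, mul_comm]
          exact Nat.mul_le_mul_left _ hcard

lemma ncard_closedNbhd_le (hdeg : ∀ v, (G.neighborSet v).ncard ≤ Δ) (k : ℕ) (B : Set V) :
    (closedNbhd G k B).ncard ≤ (Δ + 1) ^ k * B.ncard := by
  have hsub : closedNbhd G k B ⊆ ⋃ x ∈ B.toFinset, {u | withinDist G k x u} :=
    fun u ⟨x, hx, hux⟩ => Set.mem_biUnion (by simpa using hx) hux.symm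
  calc (closedNbhd G k B).ncard
      ≤ ∑ x ∈ B.toFinset, {u | withinDist G k x u}.ncard :=
        (Set.ncard_le_ncard hsub).trans (Finset.set_ncard_biUnion_le _ _)
    _ ≤ ∑ _x ∈ B.toFinset, (Δ + 1) ^ k :=
        Finset.sum_le_sum fun x _ => ncard_setOf_withinDist_le hdeg x k
    _ = (Δ + 1) ^ k * B.ncard := by
        rw [Finset.sum_const, smul_eq_mul, mul_comm, Set.ncard_eq_toFinset_card']

end Balls

section Local

variable {V L : Type*}

def IsLocalPotential (G : SimpleGraph V) (r : ℕ) (Ψ : V → (V → L) → ℝ) : Prop :=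
  ∀ v (ℓ ℓ' : V → L), (∀ u, withinDist G r v u → ℓ u = ℓ' u) → Ψ v ℓ = Ψ v ℓ'

namespace IsLocalPotential

variable {G : SimpleGraph V} {r : ℕ} {Ψ : V → (V → L) → ℝ} {B : Set V} {a b : V → L}

lemma apply_eq_of_eqOn_compl (hΨ : IsLocalPotential G r Ψ) (hab : ∀ z ∉ B, a z = b z) {u : V}
    (hu : u ∉ closedNbhd G r B) : Ψ u a = Ψ u b :=
  hΨ u a b fun z huz => hab z fun hz => hu ⟨z, hz, huz⟩

end IsLocalPotential

end Local

section Potential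

variable {V L : Type*} [Fintype V]

def pot (Ψ : V → (V → L) → ℝ) (ℓ : V → L) : ℝ :=
  ∑ v, Ψ v ℓ

lemma le_IR_iff {Ψ : V → (V → L) → ℝ} {B : Set V} (hB : B.Nonempty) {a b : V → L} {c : ℝ} :
    c ≤ IR Ψ B a b ↔ c * B.ncard ≤ pot Ψ a - pot Ψ b := by
  have hpos : (0 : ℝ) < B.ncard := by exact_mod_cast (Set.ncard_pos B.toFinite).2 hB
  rw [IR, if_neg hB.ne_empty, le_div_iff₀ hpos]
  rfl

lemma nonempty_of_le_IR {Ψ : V → (V → L) → ℝ} {B : Set V} {a b : V → L} {c : ℝ} (hc : 0 < c)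
    (h : c ≤ IR Ψ B a b) : B.Nonempty := by
  rw [Set.nonempty_iff_ne_empty]
  rintro rfl
  rw [IR, if_pos rfl] at h
  exact hc.not_ge h

namespace IsLocalPotential

variable {G : SimpleGraph V} {r Δ : ℕ} {Ψ : V → (V → L) → ℝ} {Λ : ℝ} {B : Set V} {a b : V → L}

lemma pot_sub_pot_le (hΨ : IsLocalPotential G r Ψ) (hΨΛ : ∀ v ℓ, 0 ≤ Ψ v ℓ ∧ Ψ v ℓ ≤ Λ)
    (hab : ∀ z ∉ B, a z = b z) : pot Ψ a - pot Ψ b ≤ Λ * (closedNbhd G r B).ncard := by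
  calc pot Ψ a - pot Ψ b = ∑ u ∈ (closedNbhd G r B).toFinset, (Ψ u a - Ψ u b) := by
        rw [pot, pot, ← Finset.sum_sub_distrib]
        refine (Finset.sum_subset (Finset.subset_univ _) fun u _ hu => ?_).symm
        rw [hΨ.apply_eq_of_eqOn_compl hab (by simpa using hu), sub_self]
    _ ≤ ∑ _u ∈ (closedNbhd G r B).toFinset, Λ :=
        Finset.sum_le_sum fun u _ => by linarith [(hΨΛ u a).2, (hΨΛ u b).1]
    _ = Λ * (closedNbhd G r B).ncard := by
        rw [Finset.sum_const, nsmul_eq_mul, mul_comm, Set.ncard_eq_toFinset_card']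

lemma pot_sub_pot_le_mul_ncard (hΨ : IsLocalPotential G r Ψ)
    (hΨΛ : ∀ v ℓ, 0 ≤ Ψ v ℓ ∧ Ψ v ℓ ≤ Λ) (hΛ : 0 ≤ Λ)
    (hdeg : ∀ v, (G.neighborSet v).ncard ≤ Δ) (hab : ∀ z ∉ B, a z = b z) :
    pot Ψ a - pot Ψ b ≤ Λ * (Δ + 1) ^ r * B.ncard := by
  calc pot Ψ a - pot Ψ b ≤ Λ * (closedNbhd G r B).ncard := hΨ.pot_sub_pot_le hΨΛ hab
    _ ≤ Λ * ((Δ + 1) ^ r * B.ncard : ℕ) := by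
        gcongr
        exact ncard_closedNbhd_le hdeg r B
    _ = Λ * (Δ + 1) ^ r * B.ncard := by push_cast; ring

lemma le_of_mul_ncard_le (hΨ : IsLocalPotential G r Ψ) (hΨΛ : ∀ v ℓ, 0 ≤ Ψ v ℓ ∧ Ψ v ℓ ≤ Λ)
    (hΛ : 0 ≤ Λ) (hdeg : ∀ v, (G.neighborSet v).ncard ≤ Δ) (hab : ∀ z ∉ B, a z = b z)
    (hB : B.Nonempty) {β : ℝ} (himp : β * B.ncard ≤ pot Ψ a - pot Ψ b) :
    β ≤ Λ * (Δ + 1) ^ r := by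
  have hpos : (0 : ℝ) < B.ncard := by exact_mod_cast (Set.ncard_pos B.toFinite).2 hB
  exact le_of_mul_le_mul_right (himp.trans (hΨ.pot_sub_pot_le_mul_ncard hΨΛ hΛ hdeg hab)) hpos

end IsLocalPotential

end Potential

section RestrictedChain

variable {V L : Type*} (A : ℕ → Set V) (ℓ : ℕ → V → L)

/-- Starting from `ℓ 0`, perform only those of the first `m` relabelings `(A i, ℓ (i + 1))`
whose index `i` lies in `S`. -/
noncomputable def restrictChain (S : Finset ℕ) : ℕ → V → L
  | 0 => ℓ 0
  | m + 1 => fun u => if m ∈ S ∧ u ∈ A m then ℓ (m + 1) u else restrictChain S m u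

variable {A ℓ} {S : Finset ℕ} {m : ℕ} {u : V}

lemma restrictChain_succ_of_not (h : ¬(m ∈ S ∧ u ∈ A m)) :
    restrictChain A ℓ S (m + 1) u = restrictChain A ℓ S m u :=
  if_neg h

lemma restrictChain_eq_of_forall_mem (hstep : ∀ i < m, u ∉ A i → ℓ (i + 1) u = ℓ i u)
    (hS : ∀ i < m, u ∈ A i → i ∈ S) : restrictChain A ℓ S m u = ℓ m u := by
  induction m with
  | zero => rfl
  | succ m ih =>
    by_cases hu : u ∈ A m
    · exact if_pos ⟨hS m m.lt_succ_self hu, hu⟩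
    · rw [restrictChain_succ_of_not fun h => hu h.2,
        ih (fun i hi => hstep i (by omega)) (fun i hi => hS i (by omega)),
        hstep m m.lt_succ_self hu]

lemma restrictChain_eq_zero (hu : ∀ i ∈ S, u ∉ A i) : restrictChain A ℓ S m u = ℓ 0 u := by
  induction m with
  | zero => rfl
  | succ m ih => rw [restrictChain_succ_of_not fun h => hu m h.1 h.2, ih]

end RestrictedChain

namespace IsLocalPotential

variable {V L : Type*} [Fintype V] {G : SimpleGraph V} {r Δ h : ℕ} {Ψ : V → (V → L) → ℝ}
  {Λ β ε : ℝ} {A : ℕ → Set V} {ℓ : ℕ → V → L}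

lemma pot_sub_pot_restrictChain_succ (hΨ : IsLocalPotential G r Ψ)
    (hstep : ∀ i < h, ∀ z ∉ A i, ℓ (i + 1) z = ℓ i z) {m : ℕ} (hm : m < h) {S : Finset ℕ}
    (hS : ∀ x ∈ A m, ∀ z, withinDist G (2 * r) z x → ∀ i < h, z ∈ A i → i ∈ S) :
    pot Ψ (restrictChain A ℓ S m) - pot Ψ (restrictChain A ℓ S (m + 1)) =
      pot Ψ (ℓ m) - pot Ψ (ℓ (m + 1)) := by
  simp only [pot, ← Finset.sum_sub_distrib]
  refine Finset.sum_congr rfl fun u _ => ?_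
  -- Only potentials within `r` of `A m` change, and these read labels within `2r` of `A m`,
  -- where the restricted chain agrees with the full one.
  by_cases hu : u ∈ closedNbhd G r (A m)
  · obtain ⟨x, hx, hux⟩ := hu
    have hagree : ∀ k ≤ h, Ψ u (restrictChain A ℓ S k) = Ψ u (ℓ k) := fun k hk =>
      hΨ u _ _ fun z huz => restrictChain_eq_of_forall_mem
        (fun i hi => hstep i (by omega) z)
        (fun i hi => hS x hx z ((huz.symm.trans hux).mono (by omega)) i (by omega))
    rw [hagree m hm.le, hagree (m + 1) hm]
  · rw [hΨ.apply_eq_of_eqOn_compl (fun z hz => restrictChain_succ_of_not fun h => hz h.2) hu,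
      hΨ.apply_eq_of_eqOn_compl (hstep m hm) hu, sub_self, sub_self]

lemma sum_sub_le_pot_sub_pot_restrictChain (hΨ : IsLocalPotential G r Ψ)
    (hΨΛ : ∀ v ℓ, 0 ≤ Ψ v ℓ ∧ Ψ v ℓ ≤ Λ) (hΛ : 0 ≤ Λ) (hdeg : ∀ v, (G.neighborSet v).ncard ≤ Δ)
    (hstep : ∀ i < h, ∀ z ∉ A i, ℓ (i + 1) z = ℓ i z) {I S : Finset ℕ} (hIS : I ⊆ S)
    (hSh : S ⊆ Finset.range h)
    (hclosed : ∀ i ∈ I, ∀ x ∈ A i, ∀ z, withinDist G (2 * r) z x → ∀ i' < h, z ∈ A i' → i' ∈ S) :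
    ∑ i ∈ I, (pot Ψ (ℓ i) - pot Ψ (ℓ (i + 1))) - Λ * (Δ + 1) ^ r * ∑ i ∈ S \ I, ((A i).ncard : ℝ)
      ≤ pot Ψ (ℓ 0) - pot Ψ (restrictChain A ℓ S h) := by
  set g : ℕ → ℝ := fun m => pot Ψ (restrictChain A ℓ S m)
  have htele : pot Ψ (ℓ 0) - pot Ψ (restrictChain A ℓ S h) = ∑ m ∈ S, (g m - g (m + 1)) := by
    rw [Finset.sum_subset hSh fun m _ hm => ?_, Finset.sum_range_sub']
    · rfl
    · have : restrictChain A ℓ S (m + 1) = restrictChain A ℓ S m :=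
        funext fun z => restrictChain_succ_of_not fun h => hm h.1
      simp [g, this]
  have hI : ∑ m ∈ I, (g m - g (m + 1)) = ∑ i ∈ I, (pot Ψ (ℓ i) - pot Ψ (ℓ (i + 1))) :=
    Finset.sum_congr rfl fun m hm => hΨ.pot_sub_pot_restrictChain_succ hstep
      (Finset.mem_range.1 (hSh (hIS hm))) (hclosed m hm)
  have hSI : -(Λ * (Δ + 1) ^ r * ∑ i ∈ S \ I, ((A i).ncard : ℝ)) ≤
      ∑ m ∈ S \ I, (g m - g (m + 1)) := by
    rw [Finset.mul_sum, ← Finset.sum_neg_distrib]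
    refine Finset.sum_le_sum fun m _ => ?_
    have := hΨ.pot_sub_pot_le_mul_ncard hΨΛ hΛ hdeg (B := A m)
      (a := restrictChain A ℓ S (m + 1)) (b := restrictChain A ℓ S m)
      fun z hz => restrictChain_succ_of_not fun h => hz h.2
    linarith
  rw [htele, ← Finset.sum_sdiff hIS, hI]
  linarith

lemma mul_sum_ncard_le (hΨΛ : ∀ v ℓ, 0 ≤ Ψ v ℓ ∧ Ψ v ℓ ≤ Λ)
    (himp : ∀ i < h, β * (A i).ncard ≤ pot Ψ (ℓ i) - pot Ψ (ℓ (i + 1))) :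
    β * ∑ i ∈ Finset.range h, ((A i).ncard : ℝ) ≤ Λ * Fintype.card V := by
  have hpot0 : pot Ψ (ℓ 0) ≤ Λ * Fintype.card V := by
    calc pot Ψ (ℓ 0) ≤ ∑ _v : V, Λ := Finset.sum_le_sum fun v _ => (hΨΛ v _).2
      _ = Λ * Fintype.card V := by rw [Finset.sum_const, nsmul_eq_mul, mul_comm, Finset.card_univ]
  have hpoth : 0 ≤ pot Ψ (ℓ h) := Finset.sum_nonneg fun v _ => (hΨΛ v _).1
  calc β * ∑ i ∈ Finset.range h, ((A i).ncard : ℝ)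
      ≤ ∑ i ∈ Finset.range h, (pot Ψ (ℓ i) - pot Ψ (ℓ (i + 1))) := by
        rw [Finset.mul_sum]
        exact Finset.sum_le_sum fun i hi => himp i (Finset.mem_range.1 hi)
    _ ≤ Λ * Fintype.card V := by rw [Finset.sum_range_sub']; linarith

lemma one_add_mul_lt_of_IR_lt (hΨ : IsLocalPotential G r Ψ)
    (hΨΛ : ∀ v ℓ, 0 ≤ Ψ v ℓ ∧ Ψ v ℓ ≤ Λ) (hΛ : 0 ≤ Λ) (hdeg : ∀ v, (G.neighborSet v).ncard ≤ Δ)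
    (hstep : ∀ i < h, ∀ z ∉ A i, ℓ (i + 1) z = ℓ i z)
    (himp : ∀ i < h, β * (A i).ncard ≤ pot Ψ (ℓ i) - pot Ψ (ℓ (i + 1)))
    (hε : 0 < ε) (hεβ : ε < β) (hβ : β ≤ Λ * (Δ + 1) ^ r) {I S : Finset ℕ} (hIS : I ⊆ S)
    (hSh : S ⊆ Finset.range h)
    (hclosed : ∀ i ∈ I, ∀ x ∈ A i, ∀ z, withinDist G (2 * r) z x → ∀ i' < h, z ∈ A i' → i' ∈ S)
    (hne : (⋃ i ∈ S, A i).Nonempty)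
    (hlt : IR Ψ (⋃ i ∈ S, A i) (ℓ 0) (restrictChain A ℓ S h) < β - ε) :
    (1 + ε / (2 * (Λ * (Δ + 1) ^ r))) * ∑ i ∈ I, ((A i).ncard : ℝ) <
      ∑ i ∈ S, ((A i).ncard : ℝ) := by
  set C := Λ * (Δ + 1) ^ r
  set wI := ∑ i ∈ I, ((A i).ncard : ℝ)
  set wS := ∑ i ∈ S, ((A i).ncard : ℝ)
  have hC : 0 < C := by linarith
  have hcore := hΨ.sum_sub_le_pot_sub_pot_restrictChain hΨΛ hΛ hdeg hstep hIS hSh hclosed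
  rw [Finset.sum_sdiff_eq_sub hIS] at hcore
  have hβI : β * wI ≤ ∑ i ∈ I, (pot Ψ (ℓ i) - pot Ψ (ℓ (i + 1))) := by
    rw [Finset.mul_sum]
    exact Finset.sum_le_sum fun i hi => himp i (Finset.mem_range.1 (hSh (hIS hi)))
  have hunion : ((⋃ i ∈ S, A i).ncard : ℝ) ≤ wS := by
    simp only [wS, ← Nat.cast_sum]
    exact_mod_cast Finset.set_ncard_biUnion_le S A
  have hdrop : pot Ψ (ℓ 0) - pot Ψ (restrictChain A ℓ S h) < (β - ε) * wS := by
    refine lt_of_lt_of_le ?_ (mul_le_mul_of_nonneg_left hunion (by linarith))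
    exact lt_of_not_ge fun hge => hlt.not_ge ((le_IR_iff hne).2 hge)
  have hwI : 0 ≤ wI := Finset.sum_nonneg fun i _ => Nat.cast_nonneg _
  -- `(β + C) wI < (β + C - ε) wS`, and `1 + ε / (2C) ≤ (β + C) / (β + C - ε)` since `β ≤ C`
  have key : (β + C - ε) * ((1 + ε / (2 * C)) * wI) < (β + C - ε) * wS := by
    have hfac : (β + C - ε) * (1 + ε / (2 * C)) ≤ β + C := by
      rw [mul_add, mul_one, ← mul_div_assoc, mul_comm _ ε, mul_div_assoc]
      have : (β + C - ε) / (2 * C) ≤ 1 := by rw [div_le_one (by positivity)]; linarith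
      nlinarith
    nlinarith
  exact lt_of_mul_lt_mul_left key (by linarith)

end IsLocalPotential

-- While `w` merely increases, the first `⌈δ⁻¹⌉` steps bring it to `δ⁻¹`; only then is the
-- geometric growth used, which keeps a `log (1 / δ)` term out of the number of steps.
lemma pow_div_le_of_growth {w : ℕ → ℕ} {δ : ℝ} (hδ : 0 < δ) (m : ℕ)
    (hw : ∀ t < ⌈δ⁻¹⌉₊ * m + ⌈δ⁻¹⌉₊, (1 + δ) * w t < w (t + 1)) :
    2 ^ m / δ ≤ w (⌈δ⁻¹⌉₊ * m + ⌈δ⁻¹⌉₊) := by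
  set N := ⌈δ⁻¹⌉₊
  have hlin : ∀ t ≤ N * m + N, t ≤ w t := by
    intro t
    induction t with
    | zero => exact fun _ => Nat.zero_le _
    | succ t ih =>
      intro ht
      have hgrow : (w t : ℝ) < w (t + 1) := by
        nlinarith [hw t (by omega), (Nat.cast_nonneg (w t) : (0 : ℝ) ≤ w t)]
      have := ih (by omega)
      have : w t < w (t + 1) := by exact_mod_cast hgrow
      omega
  have hgeom : ∀ s ≤ N * m, (1 + δ) ^ s * w N ≤ w (N + s) := by
    intro s
    induction s with
    | zero => simp
    | succ s ih =>
      intro hs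
      calc (1 + δ) ^ (s + 1) * w N = (1 + δ) * ((1 + δ) ^ s * w N) := by ring
        _ ≤ (1 + δ) * w (N + s) := by gcongr; exact ih (by omega)
        _ ≤ w (N + (s + 1)) := (hw (N + s) (by omega)).le
  have hN : δ⁻¹ ≤ w N := (Nat.le_ceil _).trans (by exact_mod_cast hlin N (by omega))
  -- Bernoulli: `(1 + δ) ^ N ≥ 1 + N δ ≥ 2`
  have hpow : (2 : ℝ) ^ m ≤ (1 + δ) ^ (N * m) := by
    rw [pow_mul]
    gcongr
    calc (2 : ℝ) ≤ 1 + N * δ := by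
          have := (inv_le_iff_one_le_mul₀ hδ).1 (Nat.le_ceil δ⁻¹)
          linarith
      _ ≤ (1 + δ) ^ N := one_add_mul_le_pow (by linarith) N
  calc 2 ^ m / δ = 2 ^ m * δ⁻¹ := div_eq_mul_inv _ _
    _ ≤ (1 + δ) ^ (N * m) * w N := mul_le_mul hpow hN (by positivity) (by positivity)
    _ ≤ w (N * m + N) := by rw [Nat.add_comm]; exact hgeom _ le_rfl

section Layers

variable {V : Type*} (G : SimpleGraph V) (A : ℕ → Set V) (h : ℕ) (v : V)

noncomputable def nearIndices (R : ℕ) : Finset ℕ :=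
  (Finset.range h).filter fun i => ∃ x ∈ A i, withinDist G R x v

variable {G A h v} {D R : ℕ}

lemma nearIndices_mono {R' : ℕ} (hR : R ≤ R') : nearIndices G A h v R ⊆ nearIndices G A h v R' := by
  intro i
  simp only [nearIndices, Finset.mem_filter]
  exact fun ⟨hi, x, hx, hxv⟩ => ⟨hi, x, hx, hxv.mono hR⟩

lemma nearIndices_subset_range : nearIndices G A h v R ⊆ Finset.range h :=
  Finset.filter_subset _ _

lemma mem_nearIndices_of_mem {j : ℕ} (hj : j < h) (hv : v ∈ A j) : j ∈ nearIndices G A h v R :=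
  Finset.mem_filter.2 ⟨Finset.mem_range.2 hj, v, hv, withinDist_refl G R v⟩

lemma withinDist_of_mem_nearIndices (hdiam : ∀ i < h, ∀ x ∈ A i, ∀ y ∈ A i, withinDist G D x y)
    {i : ℕ} (hi : i ∈ nearIndices G A h v R) {u : V} (hu : u ∈ A i) : withinDist G (D + R) u v := by
  obtain ⟨hih, x, hx, hxv⟩ := Finset.mem_filter.1 hi
  exact (hdiam i (Finset.mem_range.1 hih) u hu x hx).trans hxv

lemma mem_nearIndices_of_withinDist (hdiam : ∀ i < h, ∀ x ∈ A i, ∀ y ∈ A i, withinDist G D x y)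
    {i : ℕ} (hi : i ∈ nearIndices G A h v R) {x z : V} (hx : x ∈ A i) {k : ℕ}
    (hzx : withinDist G k z x) {i' : ℕ} (hi' : i' < h) (hz : z ∈ A i') :
    i' ∈ nearIndices G A h v (k + (D + R)) :=
  Finset.mem_filter.2
    ⟨Finset.mem_range.2 hi', z, hz, hzx.trans (withinDist_of_mem_nearIndices hdiam hi hx)⟩

end Layers

namespace IsLocalPotential

variable {V L : Type*} [Fintype V] {G : SimpleGraph V} {r Δ h : ℕ} {Ψ : V → (V → L) → ℝ}
  {Λ β ε : ℝ} {A : ℕ → Set V} {ℓ : ℕ → V → L}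

theorem exists_lt_le_IR_restrictChain_nearIndices (hΨ : IsLocalPotential G r Ψ)
    (hΨΛ : ∀ v ℓ, 0 ≤ Ψ v ℓ ∧ Ψ v ℓ ≤ Λ) (hΛ : 0 ≤ Λ) (hdeg : ∀ v, (G.neighborSet v).ncard ≤ Δ)
    (hε : 0 < ε) (hεβ : ε < β) (hβ : β ≤ Λ * (Δ + 1) ^ r)
    (hstep : ∀ i < h, ∀ z ∉ A i, ℓ (i + 1) z = ℓ i z)
    (himp : ∀ i < h, β * (A i).ncard ≤ pot Ψ (ℓ i) - pot Ψ (ℓ (i + 1))) {D : ℕ}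
    (hdiam : ∀ i < h, ∀ x ∈ A i, ∀ y ∈ A i, withinDist G D x y) {j : ℕ} (hj : j < h) {v : V}
    (hv : v ∈ A j) :
    ∃ t < ⌈2 * (Λ * (Δ + 1) ^ r) / ε⌉₊ * (Nat.log 2 (Fintype.card V) + 2),
      β - ε ≤ IR Ψ (⋃ i ∈ nearIndices G A h v ((t + 1) * (D + 2 * r)), A i) (ℓ 0)
        (restrictChain A ℓ (nearIndices G A h v ((t + 1) * (D + 2 * r))) h) := by
  set C := Λ * (Δ + 1) ^ r
  set δ := ε / (2 * C)
  have hC : 0 < C := by linarith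
  have hδ : 0 < δ := by positivity
  set m := Nat.log 2 (Fintype.card V) + 1
  have hT : ⌈2 * C / ε⌉₊ * (Nat.log 2 (Fintype.card V) + 2) = ⌈δ⁻¹⌉₊ * m + ⌈δ⁻¹⌉₊ := by
    rw [show 2 * C / ε = δ⁻¹ by rw [inv_div]]
    ring
  rw [hT]
  set I : ℕ → Finset ℕ := fun t => nearIndices G A h v (t * (D + 2 * r))
  set w : ℕ → ℕ := fun t => ∑ i ∈ I t, (A i).ncard
  by_contra! hall
  have hgrowth : 2 ^ m / δ ≤ w (⌈δ⁻¹⌉₊ * m + ⌈δ⁻¹⌉₊) := pow_div_le_of_growth hδ m fun t ht => by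
    push_cast [w]
    refine hΨ.one_add_mul_lt_of_IR_lt hΨΛ hΛ hdeg hstep himp hε hεβ hβ
      (nearIndices_mono (by nlinarith)) nearIndices_subset_range
      (fun i hi x hx z hzx i' hi' hz => nearIndices_mono (le_of_eq (by ring))
        (mem_nearIndices_of_withinDist hdiam hi hx hzx hi' hz))
      ⟨v, Set.mem_biUnion (mem_nearIndices_of_mem hj hv) hv⟩ (hall t ht)
  have hwT : β * w (⌈δ⁻¹⌉₊ * m + ⌈δ⁻¹⌉₊) ≤ Λ * Fintype.card V := by
    refine le_trans (mul_le_mul_of_nonneg_left ?_ (by linarith)) (mul_sum_ncard_le hΨΛ himp)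
    push_cast [w]
    exact Finset.sum_le_sum_of_subset_of_nonneg nearIndices_subset_range
      fun _ _ _ => Nat.cast_nonneg _
  have hn : (Fintype.card V : ℝ) < 2 ^ m := by
    exact_mod_cast Nat.lt_pow_succ_log_self one_lt_two _
  have hΛC : Λ ≤ C := le_mul_of_one_le_right hΛ (one_le_pow₀ (by linarith))
  have hm : (0 : ℝ) < 2 ^ m := by positivity
  have : β * (2 ^ m / δ) ≤ C * 2 ^ m := by
    calc β * (2 ^ m / δ) ≤ β * w (⌈δ⁻¹⌉₊ * m + ⌈δ⁻¹⌉₊) :=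
          mul_le_mul_of_nonneg_left hgrowth (by linarith)
      _ ≤ Λ * Fintype.card V := hwT
      _ ≤ C * 2 ^ m := by gcongr
  rw [div_div_eq_mul_div, mul_div_assoc', div_le_iff₀ hε] at this
  nlinarith [mul_lt_mul_of_pos_right hεβ (mul_pos hm hC)]

theorem exists_le_IR_near (hΨ : IsLocalPotential G r Ψ) (hΨΛ : ∀ v ℓ, 0 ≤ Ψ v ℓ ∧ Ψ v ℓ ≤ Λ)
    (hΛ : 0 ≤ Λ) (hdeg : ∀ v, (G.neighborSet v).ncard ≤ Δ) (hε : 0 < ε) (hεβ : ε < β)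
    (hβ : β ≤ Λ * (Δ + 1) ^ r) (hstep : ∀ i < h, ∀ z ∉ A i, ℓ (i + 1) z = ℓ i z)
    (himp : ∀ i < h, β * (A i).ncard ≤ pot Ψ (ℓ i) - pot Ψ (ℓ (i + 1))) {D : ℕ}
    (hdiam : ∀ i < h, ∀ x ∈ A i, ∀ y ∈ A i, withinDist G D x y) {j : ℕ} (hj : j < h) {v : V}
    (hv : v ∈ A j) :
    ∃ B : Set V, v ∈ B ∧
      B ⊆ {u | withinDist G ((⌈2 * (Λ * (Δ + 1) ^ r) / ε⌉₊ *
        (Nat.log 2 (Fintype.card V) + 2) + 1) * (D + 2 * r)) u v} ∩ ⋃ i < h, A i ∧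
      ∃ ℓB : V → L, (∀ u ∉ B, ℓB u = ℓ 0 u) ∧ β - ε ≤ IR Ψ B (ℓ 0) ℓB := by
  obtain ⟨t, ht, hIR⟩ := hΨ.exists_lt_le_IR_restrictChain_nearIndices hΨΛ hΛ hdeg hε hεβ hβ
    hstep himp hdiam hj hv
  set I := nearIndices G A h v ((t + 1) * (D + 2 * r))
  refine ⟨⋃ i ∈ I, A i, Set.mem_biUnion (mem_nearIndices_of_mem hj hv) hv, fun u hu => ?_,
    restrictChain A ℓ I h,
    fun u hu => restrictChain_eq_zero fun i hi hui => hu (Set.mem_biUnion hi hui), hIR⟩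
  obtain ⟨i, hi, hui⟩ := Set.mem_iUnion₂.1 hu
  refine ⟨(withinDist_of_mem_nearIndices hdiam hi hui).mono ?_,
    Set.mem_iUnion₂.2 ⟨i, Finset.mem_range.1 (nearIndices_subset_range hi), hui⟩⟩
  nlinarith

end IsLocalPotential

lemma Fin.clamp_of_lt {i h : ℕ} (hi : i < h) : Fin.clamp i h = (⟨i, hi⟩ : Fin h).castSucc :=
  Fin.ext (Nat.min_eq_left hi.le)

lemma Fin.clamp_succ_of_lt {i h : ℕ} (hi : i < h) : Fin.clamp (i + 1) h = (⟨i, hi⟩ : Fin h).succ :=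
  Fin.ext (Nat.min_eq_left hi)

lemma radius_le {n r : ℕ} (hn : 2 ≤ n) {C ε c₃ : ℝ} (hε : 0 < ε) (hεC : ε < C) (hc₃ : 0 < c₃) :
    (((⌈2 * C / ε⌉₊ * (Nat.log 2 n + 2) + 1) * (⌈c₃ * Real.log n / ε⌉₊ + 2 * r) : ℕ) : ℝ) ≤
      12 * (C / Real.log 2) * (c₃ + (2 * r + 1) * (C / Real.log 2)) * Real.log n ^ 2 / ε ^ 2 := by
  set K := C / Real.log 2
  set E := Real.log n / ε
  set N := ⌈2 * C / ε⌉₊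
  have hC : 0 < C := hε.trans hεC
  have hlog2 : 0 < Real.log 2 := Real.log_pos one_lt_two
  have hlogn : Real.log 2 ≤ Real.log n := Real.log_le_log two_pos (by exact_mod_cast hn)
  have hE : 0 < E := div_pos (hlog2.trans_le hlogn) hε
  have hlogn1 : 1 ≤ Real.log n / Real.log 2 := (one_le_div hlog2).2 hlogn
  have hCε : 1 ≤ C / ε := (one_le_div hε).2 hεC.le
  have hKE : 1 ≤ K * E := by
    calc (1 : ℝ) ≤ C / ε * (Real.log n / Real.log 2) := one_le_mul_of_one_le_of_one_le hCε hlogn1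
      _ = K * E := by simp only [K, E]; ring
  have hL : (Nat.log 2 n : ℝ) ≤ Real.log n / Real.log 2 := by
    simpa [Real.logb] using Real.natLog_le_logb n 2
  have hN1 : (1 : ℝ) ≤ N := by
    exact_mod_cast Nat.one_le_iff_ne_zero.2 (Nat.ceil_pos.2 (by positivity)).ne'
  have hN : (N : ℝ) ≤ 3 * (C / ε) := by
    have := Nat.ceil_lt_add_one (show 0 ≤ 2 * C / ε by positivity)
    linarith [mul_div_assoc 2 C ε]
  have hD : (⌈c₃ * Real.log n / ε⌉₊ : ℝ) ≤ c₃ * E + 1 := by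
    have := Nat.ceil_lt_add_one (show 0 ≤ c₃ * Real.log n / ε by rw [mul_div_assoc]; positivity)
    linarith [mul_div_assoc c₃ (Real.log n) ε]
  have hfirst : (N : ℝ) * (Nat.log 2 n + 2) + 1 ≤ 12 * K * E := by
    calc (N : ℝ) * (Nat.log 2 n + 2) + 1 ≤ N * (4 * (Real.log n / Real.log 2)) := by nlinarith
      _ ≤ 3 * (C / ε) * (4 * (Real.log n / Real.log 2)) := by gcongr
      _ = 12 * K * E := by simp only [K, E]; ring
  have hsecond : (⌈c₃ * Real.log n / ε⌉₊ : ℝ) + 2 * r ≤ (c₃ + (2 * r + 1) * K) * E := by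
    nlinarith [(Nat.cast_nonneg r : (0 : ℝ) ≤ r)]
  push_cast
  calc ((N : ℝ) * (Nat.log 2 n + 2) + 1) * (⌈c₃ * Real.log n / ε⌉₊ + 2 * r)
      ≤ (12 * K * E) * ((c₃ + (2 * r + 1) * K) * E) := by gcongr
    _ = 12 * K * (c₃ + (2 * r + 1) * K) * Real.log n ^ 2 / ε ^ 2 := by simp only [E]; ring

theorem imprChain_general (Δ r : ℕ)
    (Λ : ℝ) (hΛ : 0 < Λ) (c₃ : ℝ) (hc₃ : 0 < c₃) :
    ∃ c₂ : ℝ, 0 < c₂ ∧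
      ∀ (V : Type) [Fintype V], ∀ (G : SimpleGraph V),
        (∀ v, (G.neighborSet v).ncard ≤ Δ) →
        2 ≤ Fintype.card V →
        ∀ (L : Type) [Fintype L] [Nonempty L], ∀ (Ψ : V → (V → L) → ℝ),
          (∀ v (ℓ ℓ' : V → L),
            (∀ u, withinDist G r v u → ℓ u = ℓ' u) → Ψ v ℓ = Ψ v ℓ') →
          (∀ v ℓ, 0 ≤ Ψ v ℓ ∧ Ψ v ℓ ≤ Λ) →
          ∀ (β ε : ℝ), 0 < β → 0 < ε → ε < β →
          ∀ (h : ℕ) (ℓ : Fin (h + 1) → V → L) (A : Fin h → Set V),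
            (∀ i : Fin h, ∀ v ∉ A i, ℓ i.succ v = ℓ i.castSucc v) →
            (∀ i : Fin h, (∑ v, Ψ v (ℓ i.succ)) < ∑ v, Ψ v (ℓ i.castSucc)) →
            (∀ i : Fin h, β ≤ IR Ψ (A i) (ℓ i.castSucc) (ℓ i.succ)) →
            (∀ i : Fin h, ∀ x ∈ A i, ∀ y ∈ A i, ∃ p : G.Walk x y,
              (p.length : ℝ) ≤ c₃ * Real.log (Fintype.card V) / ε) →
            ∀ (j : Fin h), ∀ v ∈ A j,
              ∃ k : ℕ, (k : ℝ) ≤ c₂ * (Real.log (Fintype.card V)) ^ 2 / ε ^ 2 ∧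
                ∃ B : Set V, B.Nonempty ∧
                  B ⊆ {u | withinDist G k u v} ∩ (⋃ i : Fin h, A i) ∧
                  ∃ ℓB : V → L, (∀ u ∉ B, ℓB u = ℓ 0 u) ∧
                    β - ε ≤ IR Ψ B (ℓ 0) ℓB := by
  set C := Λ * ((Δ : ℝ) + 1) ^ r
  refine ⟨12 * (C / Real.log 2) * (c₃ + (2 * r + 1) * (C / Real.log 2)), by positivity, ?_⟩
  intro V _ G hdeg hn L _ _ Ψ hloc hΨΛ β ε hβ hε hεβ h ℓ A hstep _ hIR hdiam j v hv
  have hΨ : IsLocalPotential G r Ψ := hloc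
  set AN : ℕ → Set V := fun i => if hi : i < h then A ⟨i, hi⟩ else ∅
  have hAN : ∀ i (hi : i < h), AN i = A ⟨i, hi⟩ := fun i hi => dif_pos hi
  set ℓN : ℕ → V → L := fun m => ℓ (Fin.clamp m h)
  have hstepN : ∀ i < h, ∀ z ∉ AN i, ℓN (i + 1) z = ℓN i z := fun i hi z hz => by
    simp only [ℓN, Fin.clamp_of_lt hi, Fin.clamp_succ_of_lt hi]
    exact hstep _ z (by rwa [hAN i hi] at hz)
  have himpN : ∀ i < h, β * (AN i).ncard ≤ pot Ψ (ℓN i) - pot Ψ (ℓN (i + 1)) := fun i hi => by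
    simp only [ℓN, hAN i hi, Fin.clamp_of_lt hi, Fin.clamp_succ_of_lt hi]
    exact (le_IR_iff (nonempty_of_le_IR hβ (hIR _))).1 (hIR _)
  have hdiamN : ∀ i < h, ∀ x ∈ AN i, ∀ y ∈ AN i,
      withinDist G ⌈c₃ * Real.log (Fintype.card V) / ε⌉₊ x y := fun i hi x hx y hy => by
    rw [hAN i hi] at hx hy
    obtain ⟨p, hp⟩ := hdiam _ x hx y hy
    exact ⟨p, by exact_mod_cast hp.trans (Nat.le_ceil _)⟩
  have hvN : v ∈ AN j := by rwa [hAN j j.isLt]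
  have hβC : β ≤ C := hΨ.le_of_mul_ncard_le hΨΛ hΛ.le hdeg
    (fun z hz => (hstepN j j.isLt z hz).symm) ⟨v, hvN⟩ (himpN j j.isLt)
  obtain ⟨B, hvB, hBsub, ℓB, hℓB, hB⟩ :=
    hΨ.exists_le_IR_near hΨΛ hΛ.le hdeg hε hεβ hβC hstepN himpN hdiamN j.isLt hvN
  refine ⟨_, radius_le hn hε (hεβ.trans_le hβC) hc₃, B, ⟨v, hvB⟩,
    fun u hu => ⟨(hBsub hu).1, ?_⟩, ℓB, hℓB, hB⟩
  obtain ⟨i, hi, hui⟩ := Set.mem_iUnion₂.1 (hBsub hu).2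
  exact Set.mem_iUnion.2 ⟨⟨i, hi⟩, by rwa [hAN i hi] at hui⟩

/-- For all `Δ, r ≥ 1`, `Λ > 0` and `c₃ > 0` there is `c₂ > 0` such that, in
every local-potential instance on `n ≥ 2` vertices: given a sequence of
`β`-improving sets `(A 1, ℓ 1), …, (A h, ℓ h)` w.r.t. `ℓ 0`, each of diameter
at most `c₃·(log n)/ε` (where `0 < ε < β`), for every `j` and `v ∈ A j` there
are `k ≤ c₂·(log n)²/ε²`, a nonempty `A ⊆ N_k[{v}] ∩ (A 1 ∪ … ∪ A h)`, and a
relabeling `ℓA` of `A` with `IR(A, ℓ 0, ℓA) ≥ β − ε`. -/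
theorem imprChain (Δ r : ℕ) (hΔ : 1 ≤ Δ) (hr : 1 ≤ r)
    (Λ : ℝ) (hΛ : 0 < Λ) (c₃ : ℝ) (hc₃ : 0 < c₃) :
    ∃ c₂ : ℝ, 0 < c₂ ∧
      ∀ (V : Type) [Fintype V], ∀ (G : SimpleGraph V),
        (∀ v, (G.neighborSet v).ncard ≤ Δ) →
        2 ≤ Fintype.card V →
        ∀ (L : Type) [Fintype L] [Nonempty L], ∀ (Ψ : V → (V → L) → ℝ),
          (∀ v (ℓ ℓ' : V → L),
            (∀ u, withinDist G r v u → ℓ u = ℓ' u) → Ψ v ℓ = Ψ v ℓ') →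
          (∀ v ℓ, 0 ≤ Ψ v ℓ ∧ Ψ v ℓ ≤ Λ) →
          ∀ (β ε : ℝ), 0 < β → 0 < ε → ε < β →
          ∀ (h : ℕ) (ℓ : Fin (h + 1) → V → L) (A : Fin h → Set V),
            (∀ i : Fin h, ∀ v ∉ A i, ℓ i.succ v = ℓ i.castSucc v) →
            (∀ i : Fin h, (∑ v, Ψ v (ℓ i.succ)) < ∑ v, Ψ v (ℓ i.castSucc)) →
            (∀ i : Fin h, β ≤ IR Ψ (A i) (ℓ i.castSucc) (ℓ i.succ)) →
            (∀ i : Fin h, ∀ x ∈ A i, ∀ y ∈ A i, ∃ p : G.Walk x y,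
              (p.length : ℝ) ≤ c₃ * Real.log (Fintype.card V) / ε) →
            ∀ (j : Fin h), ∀ v ∈ A j,
              ∃ k : ℕ, (k : ℝ) ≤ c₂ * (Real.log (Fintype.card V)) ^ 2 / ε ^ 2 ∧
                ∃ B : Set V, B.Nonempty ∧
                  B ⊆ {u | withinDist G k u v} ∩ (⋃ i : Fin h, A i) ∧
                  ∃ ℓB : V → L, (∀ u ∉ B, ℓB u = ℓ 0 u) ∧
                    β - ε ≤ IR Ψ B (ℓ 0) ℓB :=
  imprChain_general Δ r Λ hΛ c₃ hc₃
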